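/- The toric ideal J = ⟨y_1 y_4 - x_1 z_4, y_3 x_4 - x_3 y_4, y_2 x_4 - x_2 z_4, z_1 y_3 - x_1 z_3, z_2 x_3 - x_2 z_3, z_1 y_2 - y_1 z_2, y_2 z_3 y_4 - z_2 y_3 z_4, y_1 z_3 x_4 - z_1 x_3 z_4, x_1 z_2 x_4 - z_1 x_2 y_4, x_1 y_2 x_3 - y_1 x_2 y_3⟩ in K[x_1,...,z_4] (12 variables) equals the elimination ideal (I ∩ K[x,y,z]) where I is the ideal of 2×2 minors of the 4×4 matrix with rows (w_1, x_2, x_3, x_4), (x_1, w_2, y_3, y_4), (y_1, y_2, w_3, z_4), (z_1, z_2, z_3, w_4) in K[w_1,...,w_4, x,y,z]. -/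

import Mathlib

/-!
Both ideals are the toric ideal of the bipartite graph on the rows and columns of a `4 × 4` matrix
whose edges are its twelve off-diagonal positions, i.e. the kernel of the monomial map sending the
variable in position `(a, c)` to `s_a t_c`. The substitution `w_m ↦ s_m t_m` kills every `2 × 2`
minor, so the elimination ideal lies in this kernel; the generators of `J` visibly do too.

Conversely, for the off-diagonal positions of a square matrix of any size the kernel is generated by
the 4-cycle binomials `(p,s)(q,t) - (p,t)(q,s)` and the 6-cycle binomials
`(i,j)(j,k)(k,i) - (i,k)(k,j)(j,i)`. If `X^α - X^β` lies in the kernel, `α` and `β` have the same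
row and column sums; a single 4-cycle or 6-cycle move on `α` or on `β` makes them share a variable,
which cancels, and induction on the degree finishes. Every 4-cycle binomial is a minor of the
matrix and every 6-cycle binomial a combination of two minors, while up to symmetry the cycle
binomials are exactly the ten generators of `J`.
-/

open MvPolynomial

noncomputable section

variable (K : Type*) [Field K] [IsAlgClosed K]

-- Variables: `Sum.inl m` is the diagonal unknown `w_{m+1}`; `Sum.inr (i, r)` is the
-- `r`-th coordinate (`x`,`y`,`z` for `r = 0,1,2`) of camera `i+1`.
abbrev RR (K : Type*) [Field K] := MvPolynomial (Fin 4 ⊕ (Fin 4 × Fin 3)) K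
abbrev SS (K : Type*) [Field K] := MvPolynomial (Fin 4 × Fin 3) K

def W (m : Fin 4) : RR K := X (Sum.inl m)
def xv (i : Fin 4) : SS K := X (i, 0)
def yv (i : Fin 4) : SS K := X (i, 1)
def zv (i : Fin 4) : SS K := X (i, 2)

/-- The 4×4 matrix with rows `(w₁,x₂,x₃,x₄), (x₁,w₂,y₃,y₄), (y₁,y₂,w₃,z₄), (z₁,z₂,z₃,w₄)`. -/
def toricMatrix : Matrix (Fin 4) (Fin 4) (RR K) :=
  let V : Fin 4 → Fin 3 → RR K := fun i r => X (Sum.inr (i, r))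
  Matrix.of
    ![![W K 0,  V 1 0,  V 2 0,  V 3 0],
      ![V 0 0,  W K 1,  V 2 1,  V 3 1],
      ![V 0 1,  V 1 1,  W K 2,  V 3 2],
      ![V 0 2,  V 1 2,  V 2 2,  W K 3]]

/-- The ideal of 2×2 minors of `toricMatrix`. -/
def minorsIdeal : Ideal (RR K) :=
  Ideal.span {p | ∃ a b c d : Fin 4,
    p = toricMatrix K a c * toricMatrix K b d - toricMatrix K a d * toricMatrix K b c}

theorem sModEq_span_of_sub_mem {A : Type*} [CommRing A] {S : Set A} {a b : A}
    (h : a - b ∈ S ∨ b - a ∈ S) : a ≡ b [SMOD Ideal.span S] := by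
  rcases h with h | h
  · exact SModEq.sub_mem.2 (Ideal.subset_span h)
  · exact (SModEq.sub_mem.2 (Ideal.subset_span h)).symm

theorem Finsupp.exists_eq_add_single_one {ι : Type*} {α : ι →₀ ℕ} {e : ι} (h : α e ≠ 0) :
    ∃ γ, α = γ + Finsupp.single e 1 :=
  ⟨α - Finsupp.single e 1,
    (tsub_add_cancel_of_le (Finsupp.single_le_iff.2 (Nat.one_le_iff_ne_zero.2 h))).symm⟩

theorem Matrix.mul_mul_sub_mem_span_minors {ι R : Type*} [CommRing R] (M : Matrix ι ι R)
    (i j k : ι) :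
    M i j * M j k * M k i - M i k * M k j * M j i ∈
      Ideal.span {p | ∃ a b c d, p = M a c * M b d - M a d * M b c} := by
  have key : M i j * M j k * M k i - M i k * M k j * M j i =
      M j k * (M i j * M k i - M i i * M k j) + M k j * (M j k * M i i - M j i * M i k) := by
    ring
  rw [key]
  exact add_mem (Ideal.mul_mem_left _ _ (Ideal.subset_span ⟨i, k, j, i, rfl⟩))
    (Ideal.mul_mem_left _ _ (Ideal.subset_span ⟨j, i, k, i, rfl⟩))

namespace MvPolynomial

/-- Modulo `I` the monomial `X^a` only depends on `f a`, so the quotient map by `I` factors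
through `φ`. -/
theorem mem_of_map_eq_zero {σ τ R : Type*} [CommRing R] {I : Ideal (MvPolynomial σ R)}
    (φ : MvPolynomial σ R →ₗ[R] MvPolynomial τ R) (f : (σ →₀ ℕ) → (τ →₀ ℕ))
    (hφ : ∀ a, φ (monomial a 1) = monomial (f a) 1)
    (hI : ∀ a b, f a = f b → monomial a (1 : R) ≡ monomial b 1 [SMOD I])
    {p : MvPolynomial σ R} (hp : φ p = 0) : p ∈ I := by
  let π := (Ideal.Quotient.mkₐ R I).toLinearMap
  let ψ := (basisMonomials τ R).constr R fun m => π (monomial (Function.invFun f m) 1)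
  have hψ (m : τ →₀ ℕ) : ψ (monomial m 1) = π (monomial (Function.invFun f m) 1) := by
    simpa [coe_basisMonomials] using (basisMonomials τ R).constr_basis R _ m
  have hψφ : ψ ∘ₗ φ = π := (basisMonomials σ R).ext fun a => by
    have hfa : f (Function.invFun f (f a)) = f a := Function.invFun_eq ⟨a, rfl⟩
    rw [coe_basisMonomials, LinearMap.comp_apply, hφ, hψ]
    exact Ideal.Quotient.eq.2 (SModEq.sub_mem.1 (hI _ _ hfa))
  have := LinearMap.congr_fun hψφ p
  rw [LinearMap.comp_apply, hp, map_zero] at this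
  exact Ideal.Quotient.eq_zero_iff_mem.1 this.symm

variable {ι m n R : Type*} [CommRing R]

def edgeDegree (row : ι → m) (col : ι → n) : (ι →₀ ℕ) →+ (m ⊕ n →₀ ℕ) :=
  Finsupp.mapDomain.addMonoidHom (Sum.inl ∘ row) + Finsupp.mapDomain.addMonoidHom (Sum.inr ∘ col)

variable (R) in
/-- `X e ↦ s_(row e) * t_(col e)`, writing `s = X ∘ Sum.inl` and `t = X ∘ Sum.inr`. Its kernel is
the toric ideal of the bipartite graph whose edges `e` join `row e` to `col e`. -/
def edgeMap (row : ι → m) (col : ι → n) :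
    MvPolynomial ι R →ₐ[R] MvPolynomial (m ⊕ n) R :=
  AddMonoidAlgebra.mapDomainAlgHom R R (edgeDegree row col)

variable {row : ι → m} {col : ι → n}

theorem edgeDegree_single (e : ι) (k : ℕ) :
    edgeDegree row col (Finsupp.single e k) =
      Finsupp.single (Sum.inl (row e)) k + Finsupp.single (Sum.inr (col e)) k := by
  simp [edgeDegree]

theorem degree_edgeDegree (α : ι →₀ ℕ) : (edgeDegree row col α).degree = 2 * α.degree := by
  simp [edgeDegree, Finsupp.degree_mapDomain, two_mul]

theorem edgeDegree_inl_ne_zero {α : ι →₀ ℕ} {a : m} :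
    edgeDegree row col α (Sum.inl a) ≠ 0 ↔ ∃ e, α e ≠ 0 ∧ row e = a := by
  classical
  simp [edgeDegree, ← Finsupp.mem_support_iff, Finsupp.mapDomain_support_of_subsingletonAddUnits]

theorem edgeDegree_inr_ne_zero {α : ι →₀ ℕ} {c : n} :
    edgeDegree row col α (Sum.inr c) ≠ 0 ↔ ∃ e, α e ≠ 0 ∧ col e = c := by
  classical
  simp [edgeDegree, ← Finsupp.mem_support_iff, Finsupp.mapDomain_support_of_subsingletonAddUnits,
    Finsupp.mapDomain_of_notMem_range]

theorem exists_row_eq_of_edgeDegree_eq {α β : ι →₀ ℕ}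
    (h : edgeDegree row col α = edgeDegree row col β) {v : ι} (hv : α v ≠ 0) :
    ∃ w, β w ≠ 0 ∧ row w = row v :=
  edgeDegree_inl_ne_zero.1 (h ▸ edgeDegree_inl_ne_zero.2 ⟨v, hv, rfl⟩)

theorem exists_col_eq_of_edgeDegree_eq {α β : ι →₀ ℕ}
    (h : edgeDegree row col α = edgeDegree row col β) {v : ι} (hv : α v ≠ 0) :
    ∃ w, β w ≠ 0 ∧ col w = col v :=
  edgeDegree_inr_ne_zero.1 (h ▸ edgeDegree_inr_ne_zero.2 ⟨v, hv, rfl⟩)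

theorem edgeMap_monomial (a : ι →₀ ℕ) (c : R) :
    edgeMap R row col (monomial a c) = monomial (edgeDegree row col a) c := by
  simp [edgeMap, ← single_eq_monomial]

theorem edgeMap_X (e : ι) :
    edgeMap R row col (X e) = X (Sum.inl (row e)) * X (Sum.inr (col e)) := by
  simp [X, edgeMap_monomial, edgeDegree_single, monomial_mul]

theorem edgeMap_rename {κ : Type*} (f : κ → ι) (p : MvPolynomial κ R) :
    edgeMap R row col (rename f p) = edgeMap R (row ∘ f) (col ∘ f) p := by
  suffices (edgeMap R row col).comp (rename f) = edgeMap R (row ∘ f) (col ∘ f) from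
    AlgHom.congr_fun this p
  exact algHom_ext fun i => by simp [edgeMap_X]

end MvPolynomial

namespace OffDiagonal

open MvPolynomial

variable {n : ℕ}

/-- The variable `(c, r)` stands for the `r`-th off-diagonal entry of column `c`, counted from the
top with the diagonal skipped; this matches the layout of `toricMatrix`. -/
def row (e : Fin (n + 1) × Fin n) : Fin (n + 1) := e.1.succAbove e.2

/-- The inverse of `e ↦ (row e, e.1)`, written out so that concrete entries reduce by `simp`. -/
def entry (a c : Fin (n + 1)) (h : a ≠ c) : Fin (n + 1) × Fin n :=
  (c, ⟨if a.val < c.val then a.val else a.val - 1, by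
    have := Fin.val_ne_of_ne h; have := a.2; have := c.2; split_ifs <;> omega⟩)

theorem row_ne_fst (e : Fin (n + 1) × Fin n) : row e ≠ e.1 := Fin.succAbove_ne _ _

@[simp]
theorem entry_fst {a c : Fin (n + 1)} (h : a ≠ c) : (entry a c h).1 = c := rfl

@[simp]
theorem row_entry {a c : Fin (n + 1)} (h : a ≠ c) : row (entry a c h) = a := by
  have := Fin.val_ne_of_ne h
  ext
  simp only [row, entry, Fin.succAbove, Fin.lt_def, Fin.val_castSucc]
  split_ifs <;> simp only [Fin.val_castSucc, Fin.val_succ] at * <;> omega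

theorem entry_row_fst (e : Fin (n + 1) × Fin n) : entry (row e) e.1 (row_ne_fst e) = e := by
  ext
  · rfl
  simp only [row, entry, Fin.succAbove, Fin.lt_def, Fin.val_castSucc]
  split_ifs <;> simp only [Fin.val_castSucc, Fin.val_succ] at * <;> omega

theorem entry_eq {a c : Fin (n + 1)} (h : a ≠ c) {e : Fin (n + 1) × Fin n} (ha : row e = a)
    (hc : e.1 = c) : entry a c h = e := by
  subst ha hc
  exact entry_row_fst e

theorem ext_row_fst {e e' : Fin (n + 1) × Fin n} (hr : row e = row e') (hc : e.1 = e'.1) :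
    e = e' :=
  (entry_eq (row_ne_fst e') hr hc).symm.trans (entry_row_fst e')

variable {R : Type*} [CommRing R]

def HasQuadricRelations (I : Ideal (MvPolynomial (Fin (n + 1) × Fin n) R)) : Prop :=
  ∀ p q s t (hps : p ≠ s) (hqt : q ≠ t) (hpt : p ≠ t) (hqs : q ≠ s),
    X (entry p s hps) * X (entry q t hqt) ≡ X (entry p t hpt) * X (entry q s hqs) [SMOD I]

def HasCubicRelations (I : Ideal (MvPolynomial (Fin (n + 1) × Fin n) R)) : Prop :=
  ∀ i j k (hij : i ≠ j) (hjk : j ≠ k) (hki : k ≠ i),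
    X (entry i j hij) * X (entry j k hjk) * X (entry k i hki) ≡
      X (entry i k hki.symm) * X (entry k j hjk.symm) * X (entry j i hij.symm) [SMOD I]

variable {I : Ideal (MvPolynomial (Fin (n + 1) × Fin n) R)}

theorem exists_quadric_move (hQ : HasQuadricRelations I) {β : Fin (n + 1) × Fin n →₀ ℕ}
    {u v : Fin (n + 1) × Fin n} (hu : β u ≠ 0) (hv : β v ≠ 0) (huv : u ≠ v)
    (h₁ : row u ≠ v.1) (h₂ : row v ≠ u.1) :
    ∃ β', edgeDegree row Prod.fst β' = edgeDegree row Prod.fst β ∧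
      monomial β' (1 : R) ≡ monomial β 1 [SMOD I] ∧
      ∀ w, row w = row u → w.1 = v.1 → β' w ≠ 0 := by
  obtain ⟨γ, rfl⟩ := Finsupp.exists_eq_add_single_one hv
  obtain ⟨δ, rfl⟩ := Finsupp.exists_eq_add_single_one (e := u) (by simpa [huv] using hu)
  refine ⟨δ + Finsupp.single (entry (row u) v.1 h₁) 1 + Finsupp.single (entry (row v) u.1 h₂) 1,
    ?_, ?_, fun w hr hc => ?_⟩
  · simp only [map_add, edgeDegree_single, row_entry, entry_fst]
    abel
  · have hrel := hQ (row u) (row v) u.1 v.1 (row_ne_fst u) (row_ne_fst v) h₁ h₂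
    rw [entry_row_fst, entry_row_fst] at hrel
    simp only [monomial_add_single, pow_one, mul_assoc]
    exact SModEq.rfl.mul hrel.symm
  · rw [← entry_eq h₁ hr hc]
    simp

theorem exists_cubic_move (hC : HasCubicRelations I) {α : Fin (n + 1) × Fin n →₀ ℕ}
    {u₁ u₂ u₃ : Fin (n + 1) × Fin n} (hu₁ : α u₁ ≠ 0) (hu₂ : α u₂ ≠ 0) (hu₃ : α u₃ ≠ 0)
    (h₁₂ : u₁.1 = row u₂) (h₂₃ : u₂.1 = row u₃) (h₃₁ : u₃.1 = row u₁) :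
    ∃ α', edgeDegree row Prod.fst α' = edgeDegree row Prod.fst α ∧
      monomial α' (1 : R) ≡ monomial α 1 [SMOD I] ∧
      ∀ w, row w = row u₁ → w.1 = u₂.1 → α' w ≠ 0 := by
  have hij : row u₁ ≠ row u₂ := h₁₂ ▸ row_ne_fst u₁
  have hjk : row u₂ ≠ row u₃ := h₂₃ ▸ row_ne_fst u₂
  have hki : row u₃ ≠ row u₁ := h₃₁ ▸ row_ne_fst u₃
  have hu₁u₂ : u₁ ≠ u₂ := fun h => hij (h ▸ rfl)
  have hu₁u₃ : u₁ ≠ u₃ := fun h => hki (h ▸ rfl)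
  have hu₂u₃ : u₂ ≠ u₃ := fun h => hjk (h ▸ rfl)
  obtain ⟨γ, rfl⟩ := Finsupp.exists_eq_add_single_one hu₃
  obtain ⟨δ, rfl⟩ := Finsupp.exists_eq_add_single_one (e := u₂) (by simpa [hu₂u₃] using hu₂)
  obtain ⟨ε, rfl⟩ :=
    Finsupp.exists_eq_add_single_one (e := u₁) (by simpa [hu₁u₂, hu₁u₃] using hu₁)
  have hrel := hC (row u₁) (row u₂) (row u₃) hij hjk hki
  rw [entry_eq hij rfl h₁₂, entry_eq hjk rfl h₂₃, entry_eq hki rfl h₃₁] at hrel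
  refine ⟨ε + Finsupp.single (entry (row u₁) (row u₃) hki.symm) 1 +
    Finsupp.single (entry (row u₃) (row u₂) hjk.symm) 1 +
    Finsupp.single (entry (row u₂) (row u₁) hij.symm) 1, ?_, ?_, fun w hr hc => ?_⟩
  · simp only [map_add, edgeDegree_single, row_entry, entry_fst, h₁₂, h₂₃, h₃₁]
    abel
  · simp only [monomial_add_single, pow_one, mul_assoc]
    exact SModEq.rfl.mul (by simpa only [mul_assoc] using hrel.symm)
  · rw [← entry_eq hki.symm hr (hc.trans h₂₃)]
    simp

variable (I) in
/-- The induction hypothesis of `sModEq_of_edgeDegree_eq`. -/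
def CongrOfCommonEntry (α : Fin (n + 1) × Fin n →₀ ℕ) : Prop :=
  ∀ α' β' : Fin (n + 1) × Fin n →₀ ℕ, edgeDegree row Prod.fst α' = edgeDegree row Prod.fst α →
    edgeDegree row Prod.fst β' = edgeDegree row Prod.fst α → (∃ w, α' w ≠ 0 ∧ β' w ≠ 0) →
    monomial α' (1 : R) ≡ monomial β' 1 [SMOD I]

/-- Here `α` contains the entry `v₀ = (p, s)` and `β` the entries `w₁ = (p, t)`, `w₂ = (t, s)`.
Column `t` or row `t` of `α` then supplies a 4-cycle or 6-cycle move creating `w₁` or `w₂` in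
`α`. -/
theorem sModEq_of_two_path (hQ : HasQuadricRelations I) (hC : HasCubicRelations I)
    {α β : Fin (n + 1) × Fin n →₀ ℕ}
    (h : edgeDegree row Prod.fst α = edgeDegree row Prod.fst β)
    (hind : CongrOfCommonEntry I α)
    {v₀ w₁ w₂ : Fin (n + 1) × Fin n} (hv₀ : α v₀ ≠ 0) (hw₁ : β w₁ ≠ 0) (hw₂ : β w₂ ≠ 0)
    (hw₁r : row w₁ = row v₀) (hw₂r : row w₂ = w₁.1) (hw₂c : w₂.1 = v₀.1) (hts : w₁.1 ≠ v₀.1) :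
    monomial α (1 : R) ≡ monomial β 1 [SMOD I] := by
  have finish : ∀ α', edgeDegree row Prod.fst α' = edgeDegree row Prod.fst α →
      monomial α' (1 : R) ≡ monomial α 1 [SMOD I] →
      ∀ w, α' w ≠ 0 → β w ≠ 0 → monomial α (1 : R) ≡ monomial β 1 [SMOD I] :=
    fun α' hD hmod w hα' hβ => hmod.symm.trans (hind α' β hD h.symm ⟨w, hα', hβ⟩)
  obtain ⟨u₁, hu₁, hu₁r⟩ := exists_row_eq_of_edgeDegree_eq h.symm hw₂
  by_cases hc : u₁.1 = row v₀
  · obtain ⟨u₂, hu₂, hu₂c⟩ := exists_col_eq_of_edgeDegree_eq h.symm hw₁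
    by_cases hr : row u₂ = v₀.1
    · obtain ⟨α', hD, hmod, hα'⟩ := exists_cubic_move hC hv₀ hu₂ hu₁ hr.symm
        (hu₂c.trans (hw₂r.symm.trans hu₁r.symm)) hc
      exact finish α' hD hmod w₁ (hα' w₁ hw₁r hu₂c.symm) hw₁
    · have hp : row v₀ ≠ u₂.1 := hu₂c ▸ hw₁r ▸ row_ne_fst w₁
      obtain ⟨α', hD, hmod, hα'⟩ := exists_quadric_move hQ hv₀ hu₂
        (fun h => hts (hu₂c.symm.trans (congrArg Prod.fst h).symm)) hp hr
      exact finish α' hD hmod w₁ (hα' w₁ hw₁r hu₂c.symm) hw₁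
  · have hne : row u₁ ≠ v₀.1 := hu₁r ▸ hw₂c ▸ row_ne_fst w₂
    have hrows : row u₁ ≠ row v₀ := hu₁r ▸ hw₂r ▸ hw₁r ▸ (row_ne_fst w₁).symm
    obtain ⟨α', hD, hmod, hα'⟩ := exists_quadric_move hQ hu₁ hv₀
      (fun h => hrows (h ▸ rfl)) hne (Ne.symm hc)
    exact finish α' hD hmod w₂ (hα' w₂ hu₁r.symm hw₂c) hw₂

theorem sModEq_of_apply_ne_zero_of_apply_eq_zero (hQ : HasQuadricRelations I)
    (hC : HasCubicRelations I) {α β : Fin (n + 1) × Fin n →₀ ℕ}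
    (h : edgeDegree row Prod.fst α = edgeDegree row Prod.fst β)
    (hind : CongrOfCommonEntry I α)
    {v₀ : Fin (n + 1) × Fin n} (hv₀ : α v₀ ≠ 0) (hβv₀ : β v₀ = 0) :
    monomial α (1 : R) ≡ monomial β 1 [SMOD I] := by
  obtain ⟨w₁, hw₁, hw₁r⟩ := exists_row_eq_of_edgeDegree_eq h hv₀
  obtain ⟨w₂, hw₂, hw₂c⟩ := exists_col_eq_of_edgeDegree_eq h hv₀
  have hts : w₁.1 ≠ v₀.1 := fun ht => hw₁ (ext_row_fst hw₁r ht ▸ hβv₀)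
  by_cases hq : row w₂ = w₁.1
  · exact sModEq_of_two_path hQ hC h hind hv₀ hw₁ hw₂ hw₁r hq hw₂c hts
  · have hp : row w₁ ≠ w₂.1 := hw₁r ▸ hw₂c ▸ row_ne_fst v₀
    obtain ⟨β', hD, hmod, hβ'⟩ := exists_quadric_move hQ hw₁ hw₂
      (fun h => hts ((congrArg Prod.fst h).trans hw₂c)) hp hq
    exact (hind α β' rfl (hD.trans h.symm) ⟨v₀, hv₀, hβ' v₀ hw₁r.symm hw₂c.symm⟩).trans hmod

theorem sModEq_of_edgeDegree_eq (hQ : HasQuadricRelations I) (hC : HasCubicRelations I)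
    {α β : Fin (n + 1) × Fin n →₀ ℕ}
    (h : edgeDegree row Prod.fst α = edgeDegree row Prod.fst β) :
    monomial α (1 : R) ≡ monomial β 1 [SMOD I] := by
  induction hd : α.degree using Nat.strong_induction_on generalizing α β with
  | _ d ih =>
    have hind : CongrOfCommonEntry I α := by
      rintro α' β' hα' hβ' ⟨w, hα'w, hβ'w⟩
      obtain ⟨γ, rfl⟩ := Finsupp.exists_eq_add_single_one hα'w
      obtain ⟨δ, rfl⟩ := Finsupp.exists_eq_add_single_one hβ'w
      have hγδ : edgeDegree row Prod.fst γ = edgeDegree row Prod.fst δ :=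
        add_right_cancel (by simpa only [map_add] using hα'.trans hβ'.symm)
      have hlt : γ.degree < d := by
        have := congrArg Finsupp.degree hα'
        simp only [degree_edgeDegree, map_add, Finsupp.degree_single] at this
        omega
      simp only [monomial_add_single, pow_one]
      exact (ih _ hlt hγδ rfl).mul SModEq.rfl
    by_cases hα : α = 0
    · subst hα
      have hβ : β.degree = 0 := by
        have := congrArg Finsupp.degree h
        simp only [map_zero, degree_edgeDegree] at this
        omega
      rw [(Finsupp.degree_eq_zero_iff β).1 hβ]
    obtain ⟨v₀, hv₀⟩ := Finsupp.ne_iff.1 hα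
    by_cases hβv₀ : β v₀ = 0
    · exact sModEq_of_apply_ne_zero_of_apply_eq_zero hQ hC h hind hv₀ hβv₀
    · exact hind α β rfl h.symm ⟨v₀, hv₀, hβv₀⟩

theorem ker_edgeMap_le (hQ : HasQuadricRelations I) (hC : HasCubicRelations I) :
    RingHom.ker (edgeMap R row (Prod.fst : Fin (n + 1) × Fin n → Fin (n + 1))) ≤ I :=
  fun _ hp => mem_of_map_eq_zero (edgeMap R row Prod.fst).toLinearMap _
    (fun a => edgeMap_monomial a 1) (fun _ _ => sModEq_of_edgeDegree_eq hQ hC) hp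

end OffDiagonal

open OffDiagonal

theorem X_inr_entry (K : Type*) [Field K] {a c : Fin 4} (h : a ≠ c) :
    (X (Sum.inr (entry a c h)) : RR K) = toricMatrix K a c := by
  fin_cases a <;> fin_cases c <;> first | exact absurd rfl h | rfl

theorem toricMatrix_self (K : Type*) [Field K] (c : Fin 4) :
    toricMatrix K c c = X (Sum.inl c) := by
  fin_cases c <;> rfl

theorem edgeMap_toricMatrix (K : Type*) [Field K] (a c : Fin 4) :
    edgeMap K (Sum.elim id row) (Sum.elim id Prod.fst) (toricMatrix K a c) =
      X (Sum.inl a) * X (Sum.inr c) := by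
  rcases eq_or_ne a c with rfl | h
  · rw [toricMatrix_self, edgeMap_X]
    rfl
  · rw [← X_inr_entry K h, edgeMap_X]
    simp

theorem comap_minorsIdeal_le_ker (K : Type*) [Field K] :
    Ideal.comap (rename Sum.inr : SS K →ₐ[K] RR K).toRingHom (minorsIdeal K) ≤
      RingHom.ker (edgeMap K row (Prod.fst : Fin 4 × Fin 3 → Fin 4)) := by
  have hminors :
      minorsIdeal K ≤ RingHom.ker (edgeMap K (Sum.elim id row) (Sum.elim id Prod.fst)) := by
    rw [minorsIdeal, Ideal.span_le]
    rintro _ ⟨a, b, c, d, rfl⟩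
    simp only [SetLike.mem_coe, RingHom.mem_ker, map_sub, map_mul, edgeMap_toricMatrix]
    ring
  intro p hp
  have := hminors (Ideal.mem_comap.1 hp)
  rwa [RingHom.mem_ker, AlgHom.toRingHom_eq_coe, RingHom.coe_coe, edgeMap_rename,
    Sum.elim_comp_inr, Sum.elim_comp_inr] at this

theorem hasQuadricRelations_comap_minorsIdeal (K : Type*) [Field K] :
    HasQuadricRelations
      (Ideal.comap (rename Sum.inr : SS K →ₐ[K] RR K).toRingHom (minorsIdeal K)) := by
  intro p q s t hps hqt hpt hqs
  rw [SModEq.sub_mem, Ideal.mem_comap]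
  simp only [AlgHom.toRingHom_eq_coe, RingHom.coe_coe, map_sub, map_mul, rename_X, X_inr_entry]
  exact Ideal.subset_span ⟨p, q, s, t, rfl⟩

theorem hasCubicRelations_comap_minorsIdeal (K : Type*) [Field K] :
    HasCubicRelations
      (Ideal.comap (rename Sum.inr : SS K →ₐ[K] RR K).toRingHom (minorsIdeal K)) := by
  intro i j k hij hjk hki
  rw [SModEq.sub_mem, Ideal.mem_comap]
  simp only [AlgHom.toRingHom_eq_coe, RingHom.coe_coe, map_sub, map_mul, rename_X, X_inr_entry]
  exact (toricMatrix K).mul_mul_sub_mem_span_minors i j k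

def multiviewIdeal (K : Type*) [Field K] : Ideal (SS K) := Ideal.span {p : SS K |
      p = yv K 0 * yv K 3 - xv K 0 * zv K 3 ∨
      p = yv K 2 * xv K 3 - xv K 2 * yv K 3 ∨
      p = yv K 1 * xv K 3 - xv K 1 * zv K 3 ∨
      p = zv K 0 * yv K 2 - xv K 0 * zv K 2 ∨
      p = zv K 1 * xv K 2 - xv K 1 * zv K 2 ∨
      p = zv K 0 * yv K 1 - yv K 0 * zv K 1 ∨
      p = yv K 1 * zv K 2 * yv K 3 - zv K 1 * yv K 2 * zv K 3 ∨
      p = yv K 0 * zv K 2 * xv K 3 - zv K 0 * xv K 2 * zv K 3 ∨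
      p = xv K 0 * zv K 1 * xv K 3 - zv K 0 * xv K 1 * yv K 3 ∨
      p = xv K 0 * yv K 1 * xv K 2 - yv K 0 * xv K 1 * yv K 2}

theorem multiviewIdeal_le_ker (K : Type*) [Field K] :
    multiviewIdeal K ≤ RingHom.ker (edgeMap K row (Prod.fst : Fin 4 × Fin 3 → Fin 4)) := by
  rw [multiviewIdeal, Ideal.span_le]
  rintro _ (rfl | rfl | rfl | rfl | rfl | rfl | rfl | rfl | rfl | rfl) <;>
    simp only [SetLike.mem_coe, RingHom.mem_ker, map_sub, map_mul, xv, yv, zv, edgeMap_X] <;> ring!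

theorem hasQuadricRelations_multiviewIdeal (K : Type*) [Field K] :
    HasQuadricRelations (multiviewIdeal K) := by
  intro p q s t hps hqt hpt hqs
  -- Swapping `p, q` or `s, t` reverses the relation.
  wlog hpq : p < q generalizing p q s t
  · rcases (not_lt.1 hpq).eq_or_lt with rfl | hqp
    · rw [mul_comm]
    · simpa only [mul_comm] using (this q p s t hqs hpt hqt hps hqp).symm
  wlog hst : s < t generalizing s t
  · rcases (not_lt.1 hst).eq_or_lt with rfl | hts
    · exact SModEq.rfl
    · exact (this t s hpt hqs hps hqt hts).symm
  fin_cases p <;> fin_cases q <;> fin_cases s <;> fin_cases t <;>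
    simp at hps hqt hpt hqs hpq hst <;>
    exact sModEq_span_of_sub_mem (by simp [entry, xv, yv, zv]; ring_nf; simp)

theorem hasCubicRelations_multiviewIdeal (K : Type*) [Field K] :
    HasCubicRelations (multiviewIdeal K) := by
  intro i j k hij hjk hki
  -- Rotating `(i, j, k)` preserves the relation, swapping `j, k` reverses it.
  wlog hi : i < j ∧ i < k generalizing i j k
  · by_cases hj : j < k ∧ j < i
    · convert this j k i hjk hki hij hj using 1 <;> ring
    · convert this k i j hki hij hjk (by omega) using 1 <;> ring
  wlog hjk' : j < k generalizing j k
  · exact (this k j hki.symm hjk.symm hij.symm ⟨hi.2, hi.1⟩ (by omega)).symm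
  fin_cases i <;> fin_cases j <;> fin_cases k <;> simp at hij hjk hki hi hjk' <;>
    exact sModEq_span_of_sub_mem (by simp [entry, xv, yv, zv]; ring_nf; simp)

/-- The toric multiview ideal for four coordinate cameras equals the elimination ideal
obtained from the 2×2 minors of the 4×4 matrix by eliminating `w₁,…,w₄`. -/
theorem stmt9 :
    Ideal.span {p : SS K |
      p = yv K 0 * yv K 3 - xv K 0 * zv K 3 ∨
      p = yv K 2 * xv K 3 - xv K 2 * yv K 3 ∨
      p = yv K 1 * xv K 3 - xv K 1 * zv K 3 ∨
      p = zv K 0 * yv K 2 - xv K 0 * zv K 2 ∨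
      p = zv K 1 * xv K 2 - xv K 1 * zv K 2 ∨
      p = zv K 0 * yv K 1 - yv K 0 * zv K 1 ∨
      p = yv K 1 * zv K 2 * yv K 3 - zv K 1 * yv K 2 * zv K 3 ∨
      p = yv K 0 * zv K 2 * xv K 3 - zv K 0 * xv K 2 * zv K 3 ∨
      p = xv K 0 * zv K 1 * xv K 3 - zv K 0 * xv K 1 * yv K 3 ∨
      p = xv K 0 * yv K 1 * xv K 2 - yv K 0 * xv K 1 * yv K 2} =
    Ideal.comap (MvPolynomial.rename (Sum.inr : (Fin 4 × Fin 3) → Fin 4 ⊕ (Fin 4 × Fin 3))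
        : SS K →ₐ[K] RR K).toRingHom
      (minorsIdeal K) := by
  have hJ : multiviewIdeal K = RingHom.ker (edgeMap K row (Prod.fst : Fin 4 × Fin 3 → Fin 4)) :=
    le_antisymm (multiviewIdeal_le_ker K)
      (ker_edgeMap_le (hasQuadricRelations_multiviewIdeal K) (hasCubicRelations_multiviewIdeal K))
  have hM : Ideal.comap (rename Sum.inr : SS K →ₐ[K] RR K).toRingHom (minorsIdeal K) =
      RingHom.ker (edgeMap K row (Prod.fst : Fin 4 × Fin 3 → Fin 4)) :=
    le_antisymm (comap_minorsIdeal_le_ker K)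
      (ker_edgeMap_le (hasQuadricRelations_comap_minorsIdeal K)
        (hasCubicRelations_comap_minorsIdeal K))
  exact hJ.trans hM.symm

end
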